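/- Let A be an n×n real Z-matrix of the form A = I + M where M is an irreducible singular M-matrix. Then for any diagonal matrix D with diagonal entries in {-1, 0, 1} and D ≠ I, the matrix A - D is a nonsingular M-matrix, hence invertible with (A - D)^{-1} ≥ 0 entrywise. -/

import Mathlib

set_option maxHeartbeats 1000000

open Matrix

/-- Spectral radius of a real square matrix. -/
noncomputable def specRad {n : ℕ} (M : Matrix (Fin n) (Fin n) ℝ) : ℝ :=
  ⨆ μ : spectrum ℂ (M.map (Complex.ofReal ·)), ‖(μ : ℂ)‖

/-- `M` is a nonsingular M-matrix: `M = s•I - B` with `B ≥ 0` and `s > ρ(B)`. -/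
def IsNonsingMMatrix {n : ℕ} (M : Matrix (Fin n) (Fin n) ℝ) : Prop :=
  ∃ (s : ℝ) (B : Matrix (Fin n) (Fin n) ℝ),
    (∀ i j, 0 ≤ B i j) ∧ M = s • (1 : Matrix (Fin n) (Fin n) ℝ) - B ∧ specRad B < s

/-- `M` is a singular M-matrix: `M = s•I - B` with `B ≥ 0` and `s = ρ(B)`. -/
def IsSingMMatrix {n : ℕ} (M : Matrix (Fin n) (Fin n) ℝ) : Prop :=
  ∃ (s : ℝ) (B : Matrix (Fin n) (Fin n) ℝ),
    (∀ i j, 0 ≤ B i j) ∧ M = s • (1 : Matrix (Fin n) (Fin n) ℝ) - B ∧ specRad B = s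

/-- `M` is reducible: some symmetric permutation of `M` is block upper triangular
with two nonempty square diagonal blocks. -/
def IsReducibleM {n : ℕ} (M : Matrix (Fin n) (Fin n) ℝ) : Prop :=
  ∃ (m : ℕ) (e : Equiv.Perm (Fin n)), 0 < m ∧ m < n ∧
    ∀ i j : Fin n, m ≤ (i : ℕ) → (j : ℕ) < m → M (e i) (e j) = 0

namespace StmtAux

attribute [local instance] Matrix.linftyOpNormedRing Matrix.linftyOpNormedAlgebra
  Matrix.linftyOpNormedAddCommGroup

noncomputable instance {n : ℕ} : CompleteSpace (Matrix (Fin n) (Fin n) ℝ) :=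
  (by infer_instance : CompleteSpace (Matrix (Fin n) (Fin n) ℝ))

noncomputable instance {n : ℕ} : CompleteSpace (Matrix (Fin n) (Fin n) ℂ) :=
  (by infer_instance : CompleteSpace (Matrix (Fin n) (Fin n) ℂ))

variable {n : ℕ}

/-- complexification of a real matrix -/
noncomputable abbrev cx (X : Matrix (Fin n) (Fin n) ℝ) : Matrix (Fin n) (Fin n) ℂ :=
  X.map (Complex.ofReal ·)

lemma cx_eq_mapMatrix (X : Matrix (Fin n) (Fin n) ℝ) :
    cx X = (Complex.ofRealHom.mapMatrix : Matrix (Fin n) (Fin n) ℝ →+* _) X := rfl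

lemma specRad_def (X : Matrix (Fin n) (Fin n) ℝ) :
    specRad X = ⨆ μ : spectrum ℂ (cx X), ‖(μ : ℂ)‖ := rfl

lemma cx_pow (X : Matrix (Fin n) (Fin n) ℝ) (k : ℕ) : cx (X ^ k) = (cx X) ^ k := by
  simp [cx_eq_mapMatrix, map_pow]

lemma nnnorm_cx (X : Matrix (Fin n) (Fin n) ℝ) : ‖cx X‖₊ = ‖X‖₊ := by
  simp only [Matrix.linfty_opNNNorm_def]
  congr 1
  funext i
  congr 1
  funext j
  exact Complex.nnnorm_real _

lemma norm_cx (X : Matrix (Fin n) (Fin n) ℝ) : ‖cx X‖ = ‖X‖ :=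
  congrArg NNReal.toReal (nnnorm_cx X)

lemma specRad_nonneg (X : Matrix (Fin n) (Fin n) ℝ) : 0 ≤ specRad X :=
  Real.iSup_nonneg fun μ => norm_nonneg _

lemma abs_le_specRad {X : Matrix (Fin n) (Fin n) ℝ} {μ : ℂ}
    (hμ : μ ∈ spectrum ℂ (cx X)) : ‖μ‖ ≤ specRad X := by
  have : Finite (spectrum ℂ (cx X)) := Matrix.instFiniteSpectrum _
  exact le_ciSup (Set.Finite.bddAbove (Set.finite_range
    (fun μ : spectrum ℂ (cx X) => ‖(μ : ℂ)‖))) (⟨μ, hμ⟩ : spectrum ℂ (cx X))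

lemma specRad_lt (hn : 0 < n) {X : Matrix (Fin n) (Fin n) ℝ} {t : ℝ}
    (h : ∀ μ ∈ spectrum ℂ (cx X), ‖μ‖ < t) : specRad X < t := by
  haveI : Nonempty (Fin n) := ⟨⟨0, hn⟩⟩
  haveI : Finite (spectrum ℂ (cx X)) := Matrix.instFiniteSpectrum _
  haveI : Nonempty (spectrum ℂ (cx X)) := (spectrum.nonempty (cx X)).to_subtype
  obtain ⟨μ₀, hmax⟩ := Finite.exists_max (fun μ : spectrum ℂ (cx X) => ‖(μ : ℂ)‖)
  exact lt_of_le_of_lt (ciSup_le hmax) (h μ₀ μ₀.2)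

lemma spectralRadius_le (X : Matrix (Fin n) (Fin n) ℝ) :
    spectralRadius ℂ (cx X) ≤ ENNReal.ofReal (specRad X) := by
  rw [spectralRadius]
  refine iSup₂_le fun μ hμ => ?_
  rw [← enorm_eq_nnnorm, ← ofReal_norm]
  exact ENNReal.ofReal_le_ofReal (abs_le_specRad hμ)

lemma exists_pow_norm_lt (X : Matrix (Fin n) (Fin n) ℝ) {t : ℝ}
    (ht : specRad X < t) (ht0 : 0 < t) : ∃ k : ℕ, 0 < k ∧ ‖X ^ k‖ < t ^ k := by
  have hsr : spectralRadius ℂ (cx X) < ENNReal.ofReal t :=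
    lt_of_le_of_lt (spectralRadius_le X)
      ((ENNReal.ofReal_lt_ofReal_iff ht0).mpr ht)
  have htd := spectrum.pow_nnnorm_pow_one_div_tendsto_nhds_spectralRadius (cx X)
  have hev : ∀ᶠ k : ℕ in Filter.atTop,
      (‖(cx X) ^ k‖₊ : ENNReal) ^ (1 / (k : ℝ)) < ENNReal.ofReal t :=
    htd.eventually_lt_const hsr
  obtain ⟨k, hk, hk1⟩ := (hev.and (Filter.eventually_ge_atTop 1)).exists
  refine ⟨k, hk1, ?_⟩
  have hkpos : (0 : ℝ) < (k : ℝ) := by exact_mod_cast hk1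
  have h2 : (‖(cx X) ^ k‖₊ : ENNReal) < ENNReal.ofReal t ^ (k : ℝ) := by
    have := ENNReal.rpow_lt_rpow hk hkpos
    rwa [← ENNReal.rpow_mul, one_div, inv_mul_cancel₀ (ne_of_gt hkpos),
      ENNReal.rpow_one] at this
  rw [ENNReal.ofReal_rpow_of_pos ht0, Real.rpow_natCast] at h2
  have h3 : ‖(cx X) ^ k‖ < t ^ k := by
    rw [← enorm_eq_nnnorm, ← ofReal_norm] at h2
    exact (ENNReal.ofReal_lt_ofReal_iff (by positivity)).mp h2
  rwa [← cx_pow, norm_cx] at h3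

/-- entrywise nonnegative -/
def Nng (X : Matrix (Fin n) (Fin n) ℝ) : Prop := ∀ i j, 0 ≤ X i j

lemma Nng.mul {X Y : Matrix (Fin n) (Fin n) ℝ} (hX : Nng X) (hY : Nng Y) : Nng (X * Y) := by
  intro i j
  rw [Matrix.mul_apply]
  exact Finset.sum_nonneg fun k _ => mul_nonneg (hX i k) (hY k j)

lemma Nng.pow {X : Matrix (Fin n) (Fin n) ℝ} (hX : Nng X) (k : ℕ) : Nng (X ^ k) := by
  induction k with
  | zero => intro i j; rw [pow_zero]; by_cases h : i = j <;> simp [Matrix.one_apply, h]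
  | succ k ih => rw [pow_succ]; exact ih.mul hX

lemma Nng.mulVec_nonneg {X : Matrix (Fin n) (Fin n) ℝ} (hX : Nng X) {v : Fin n → ℝ}
    (hv : ∀ i, 0 ≤ v i) : ∀ i, 0 ≤ X.mulVec v i := by
  intro i
  rw [Matrix.mulVec, dotProduct]
  exact Finset.sum_nonneg fun k _ => mul_nonneg (hX i k) (hv k)

lemma Nng.mulVec_mono {X : Matrix (Fin n) (Fin n) ℝ} (hX : Nng X) {v w : Fin n → ℝ}
    (hvw : ∀ i, v i ≤ w i) : ∀ i, X.mulVec v i ≤ X.mulVec w i := by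
  intro i
  simp only [Matrix.mulVec, dotProduct]
  exact Finset.sum_le_sum fun k _ => mul_le_mul_of_nonneg_left (hvw k) (hX i k)

lemma entry_le_norm_mulVec (X : Matrix (Fin n) (Fin n) ℝ) (v : Fin n → ℝ) (i : Fin n) :
    X.mulVec v i ≤ ‖X‖ * ‖v‖ :=
  le_trans (le_trans (le_abs_self _) (norm_le_pi_norm (X.mulVec v) i))
    (Matrix.linfty_opNorm_mulVec X v)

lemma iter_subinvariant {X : Matrix (Fin n) (Fin n) ℝ} (hX : Nng X) {z : Fin n → ℝ}
    (hz : ∀ i, 0 ≤ z i) {t : ℝ} (ht : 0 ≤ t)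
    (hsub : ∀ i, t * z i ≤ X.mulVec z i) :
    ∀ j : ℕ, ∀ i, t ^ j * z i ≤ (X ^ j).mulVec z i := by
  intro j
  induction j with
  | zero => intro i; simp [Matrix.one_mulVec]
  | succ j ih =>
    intro i
    have h1 : ∀ i, (X ^ j).mulVec (fun l => t * z l) i ≤ (X ^ j).mulVec (X.mulVec z) i :=
      (hX.pow j).mulVec_mono hsub
    have h2 : (X ^ j).mulVec (fun l => t * z l) i = t * (X ^ j).mulVec z i := by
      simp only [Matrix.mulVec, dotProduct, Finset.mul_sum]
      exact Finset.sum_congr rfl fun k _ => by ring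
    have h3 : (X ^ j).mulVec (X.mulVec z) i = (X ^ (j + 1)).mulVec z i := by
      rw [Matrix.mulVec_mulVec, ← pow_succ]
    calc t ^ (j + 1) * z i = t * (t ^ j * z i) := by ring
    _ ≤ t * (X ^ j).mulVec z i := mul_le_mul_of_nonneg_left (ih i) ht
    _ = (X ^ j).mulVec (fun l => t * z l) i := h2.symm
    _ ≤ (X ^ (j + 1)).mulVec z i := h3 ▸ h1 i

lemma le_specRad_of_subinvariant {X : Matrix (Fin n) (Fin n) ℝ} (hX : Nng X)
    {z : Fin n → ℝ} (hz : ∀ i, 0 ≤ z i) {i₀ : Fin n} (hz0 : 0 < z i₀) {t : ℝ}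
    (ht : 0 < t) (hsub : ∀ i, t * z i ≤ X.mulVec z i) : t ≤ specRad X := by
  by_contra hcon
  push_neg at hcon
  obtain ⟨k, hkpos, hknorm⟩ := exists_pow_norm_lt X hcon ht
  have htk : (0 : ℝ) < t ^ k := by positivity
  set θ : ℝ := ‖X ^ k‖ / t ^ k with hθ
  have hθ0 : 0 ≤ θ := by positivity
  have hθ1 : θ < 1 := (div_lt_one htk).mpr hknorm
  have hznorm : 0 < ‖z‖ := by
    have := le_trans (le_abs_self _) (norm_le_pi_norm z i₀)
    linarith
  obtain ⟨m, hm⟩ := exists_pow_lt_of_lt_one (div_pos hz0 hznorm) hθ1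
  have hm' : θ ^ (m + 1) < z i₀ / ‖z‖ :=
    lt_of_le_of_lt (by calc θ ^ (m+1) = θ ^ m * θ := by ring
                         _ ≤ θ ^ m * 1 := by
                            exact mul_le_mul_of_nonneg_left hθ1.le (by positivity)
                         _ = θ ^ m := by ring) hm
  set m' := m + 1
  have hiter := iter_subinvariant hX hz ht.le hsub (k * m') i₀
  have hb : (X ^ (k * m')).mulVec z i₀ ≤ ‖X ^ k‖ ^ m' * ‖z‖ := by
    calc (X ^ (k * m')).mulVec z i₀ ≤ ‖X ^ (k * m')‖ * ‖z‖ := entry_le_norm_mulVec _ _ _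
    _ = ‖(X ^ k) ^ m'‖ * ‖z‖ := by rw [← pow_mul]
    _ ≤ ‖X ^ k‖ ^ m' * ‖z‖ := by
        exact mul_le_mul_of_nonneg_right (norm_pow_le' _ (Nat.succ_pos m)) (norm_nonneg _)
  have hnx : ‖X ^ k‖ = θ * t ^ k := by rw [hθ]; exact (div_mul_cancel₀ _ (ne_of_gt htk)).symm
  have : t ^ (k * m') * z i₀ ≤ θ ^ m' * (t ^ k) ^ m' * ‖z‖ := by
    calc t ^ (k * m') * z i₀ ≤ (X ^ (k * m')).mulVec z i₀ := hiter
    _ ≤ ‖X ^ k‖ ^ m' * ‖z‖ := hb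
    _ = θ ^ m' * (t ^ k) ^ m' * ‖z‖ := by rw [hnx]; ring
  have hfin : z i₀ ≤ θ ^ m' * ‖z‖ := by
    have htk' : (0:ℝ) < (t ^ k) ^ m' := by positivity
    rw [pow_mul] at this
    nlinarith [this, htk']
  have : z i₀ < z i₀ := by
    calc z i₀ ≤ θ ^ m' * ‖z‖ := hfin
    _ < (z i₀ / ‖z‖) * ‖z‖ := by exact mul_lt_mul_of_pos_right hm' hznorm
    _ = z i₀ := by field_simp
  exact lt_irrefl _ this

lemma compl_nonempty_of_ne_univ {S : Finset (Fin n)} (h : S ≠ Finset.univ) :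
    (Sᶜ : Finset (Fin n)).Nonempty := by
  have : ∃ x, x ∉ S := by
    by_contra hc
    push_neg at hc
    exact h (Finset.eq_univ_iff_forall.mpr hc)
  obtain ⟨x, hx⟩ := this
  exact ⟨x, Finset.mem_compl.mpr hx⟩

lemma exists_abs_eigen {X : Matrix (Fin n) (Fin n) ℝ} (hX : Nng X) {μ : ℂ}
    (hμ : μ ∈ spectrum ℂ (cx X)) :
    ∃ y : Fin n → ℝ, (∀ i, 0 ≤ y i) ∧ (∃ i, 0 < y i) ∧
      ∀ i, ‖μ‖ * y i ≤ X.mulVec y i := by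
  rw [spectrum.mem_iff] at hμ
  have hdet : (algebraMap ℂ (Matrix (Fin n) (Fin n) ℂ) μ - cx X).det = 0 := by
    by_contra h
    exact hμ ((Matrix.isUnit_iff_isUnit_det _).mpr (isUnit_iff_ne_zero.mpr h))
  obtain ⟨v, hv0, hv⟩ := (Matrix.exists_mulVec_eq_zero_iff).mpr hdet
  have hXv : ∀ i, (cx X).mulVec v i = μ * v i := by
    intro i
    have := congrFun hv i
    rw [Matrix.sub_mulVec] at this
    have h2 : (algebraMap ℂ (Matrix (Fin n) (Fin n) ℂ) μ).mulVec v i = μ * v i := by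
      rw [Matrix.algebraMap_eq_diagonal, Matrix.mulVec_diagonal]
      rfl
    simp only [Pi.sub_apply, Pi.zero_apply, sub_eq_zero] at this
    rw [← this, h2]
  refine ⟨fun i => ‖v i‖, fun i => norm_nonneg _, ?_, ?_⟩
  · obtain ⟨i, hi⟩ := Function.ne_iff.mp hv0
    exact ⟨i, norm_pos_iff.mpr hi⟩
  · intro i
    calc ‖μ‖ * ‖v i‖ = ‖(cx X).mulVec v i‖ := by
          rw [hXv i, norm_mul]
    _ = ‖∑ j, (X i j : ℂ) * v j‖ := rfl
    _ ≤ ∑ j, ‖(X i j : ℂ) * v j‖ := norm_sum_le _ _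
    _ = ∑ j, X i j * ‖v j‖ := by
        refine Finset.sum_congr rfl fun j _ => ?_
        rw [norm_mul, Complex.norm_real, Real.norm_of_nonneg (hX i j)]
    _ = X.mulVec (fun j => ‖v j‖) i := rfl

/-- combinatorial irreducibility as extracted from `¬ IsReducibleM`. -/
def Irr (X : Matrix (Fin n) (Fin n) ℝ) : Prop :=
  ∀ S : Finset (Fin n), S.Nonempty → S ≠ Finset.univ → ∃ j ∈ S, ∃ k, k ∉ S ∧ X j k ≠ 0

lemma irr_of_not_reducible {M : Matrix (Fin n) (Fin n) ℝ} (hirr : ¬ IsReducibleM M) :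
    Irr M := by
  intro S hS hSu
  by_contra hcon
  push_neg at hcon
  apply hirr
  classical
  have hn : 0 < n := by
    obtain ⟨x, _⟩ := hS
    exact x.pos
  set m := (Sᶜ : Finset (Fin n)).card with hm
  have hcardS : S.card + m = n := by
    have h1 := Finset.card_compl S (α := Fin n)
    have h2 : S.card ≤ n := by simpa using Finset.card_le_univ S
    simp only [Fintype.card_fin] at h1
    omega
  have hm0 : 0 < m := Finset.card_pos.mpr (compl_nonempty_of_ne_univ hSu)
  have hSpos : 0 < S.card := Finset.card_pos.mpr hS
  have hmn : m < n := by omega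
  have hScard : S.card = n - m := by omega
  -- build the permutation
  have hsum : m + (n - m) = n := by omega
  let eC : Fin m ≃ {x // x ∈ Sᶜ} := (Finset.equivFin (Sᶜ)).symm
  let eS0 : Fin (n - m) ≃ {x // x ∈ S} := (finCongr hScard.symm).trans (Finset.equivFin S).symm
  let eS : Fin (n - m) ≃ {x : Fin n // ¬ x ∈ Sᶜ} :=
    eS0.trans (Equiv.subtypeEquivRight fun x => (Finset.notMem_compl).symm)
  let e : Equiv.Perm (Fin n) :=
    (finCongr hsum.symm).trans ((finSumFinEquiv.symm).trans
      ((Equiv.sumCongr eC eS).trans (Equiv.sumCompl (fun x : Fin n => x ∈ Sᶜ))))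
  have he1 : ∀ i : Fin n, m ≤ (i : ℕ) → e i ∈ S := by
    intro i hi
    have hlt : (i : ℕ) - m < n - m := by omega
    have hcast : (finCongr hsum.symm) i = Fin.natAdd m ⟨(i : ℕ) - m, hlt⟩ := by
      apply Fin.ext
      simp [Fin.natAdd]
      omega
    show e i ∈ S
    simp only [e, Equiv.trans_apply, hcast, finSumFinEquiv_symm_apply_natAdd,
      Equiv.sumCongr_apply, Sum.map_inr, Equiv.sumCompl_apply_inr]
    exact Finset.notMem_compl.mp (eS ⟨(i : ℕ) - m, hlt⟩).2
  have he2 : ∀ j : Fin n, (j : ℕ) < m → e j ∈ Sᶜ := by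
    intro j hj
    have hcast : (finCongr hsum.symm) j = Fin.castAdd (n - m) ⟨(j : ℕ), hj⟩ := by
      apply Fin.ext
      simp [Fin.castAdd]
    show e j ∈ Sᶜ
    simp only [e, Equiv.trans_apply, hcast, finSumFinEquiv_symm_apply_castAdd,
      Equiv.sumCongr_apply, Sum.map_inl, Equiv.sumCompl_apply_inl]
    exact (eC ⟨(j : ℕ), hj⟩).2
  refine ⟨m, e, hm0, hmn, fun i j hi hj => ?_⟩
  exact hcon (e i) (he1 i hi) (e j) (Finset.mem_compl.mp (he2 j hj))

open scoped Classical in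
/-- support of a nonnegative vector -/
noncomputable def supp (y : Fin n → ℝ) : Finset (Fin n) :=
  Finset.univ.filter fun i => 0 < y i

lemma mem_supp {y : Fin n → ℝ} {i : Fin n} : i ∈ supp y ↔ 0 < y i := by
  simp [supp]

lemma supp_nonempty {y : Fin n → ℝ} (hy : ∀ i, 0 ≤ y i) (hy0 : y ≠ 0) :
    (supp y).Nonempty := by
  obtain ⟨i, hi⟩ := Function.ne_iff.mp hy0
  exact ⟨i, mem_supp.mpr (lt_of_le_of_ne (hy i) (Ne.symm hi))⟩

section Growth

variable {B : Matrix (Fin n) (Fin n) ℝ}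

lemma step_supp (hB : Nng B) {y : Fin n → ℝ} (hy : ∀ i, 0 ≤ y i) :
    (∀ i, 0 ≤ (1 + B).mulVec y i) ∧
    (∀ i, 0 < y i → 0 < (1 + B).mulVec y i) := by
  have hval : ∀ i, (1 + B).mulVec y i = y i + B.mulVec y i := by
    intro i
    rw [Matrix.add_mulVec, Matrix.one_mulVec]
    rfl
  have hBy : ∀ i, 0 ≤ B.mulVec y i := hB.mulVec_nonneg hy
  constructor
  · intro i; rw [hval]; exact add_nonneg (hy i) (hBy i)
  · intro i hi; rw [hval]; exact add_pos_of_pos_of_nonneg hi (hBy i)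

lemma step_supp_grow (hB : Nng B) (hI : Irr B) {y : Fin n → ℝ} (hy : ∀ i, 0 ≤ y i)
    (hne : (supp y).Nonempty) (hnu : supp y ≠ Finset.univ) :
    ∃ j, j ∉ supp y ∧ 0 < (1 + B).mulVec y j := by
  have hcne : ((supp y)ᶜ : Finset (Fin n)).Nonempty := compl_nonempty_of_ne_univ hnu
  have hcnu : ((supp y)ᶜ : Finset (Fin n)) ≠ Finset.univ := by
    intro h
    obtain ⟨x, hx⟩ := hne
    have : x ∈ ((supp y)ᶜ : Finset (Fin n)) := h ▸ Finset.mem_univ x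
    exact (Finset.mem_compl.mp this) hx
  obtain ⟨j, hj, k, hk, hBjk⟩ := hI _ hcne hcnu
  have hkS : k ∈ supp y := by
    by_contra h
    exact hk (Finset.mem_compl.mpr h)
  have hBjk' : 0 < B j k := lt_of_le_of_ne (hB j k) (Ne.symm hBjk)
  refine ⟨j, Finset.mem_compl.mp hj, ?_⟩
  have hval : (1 + B).mulVec y j = y j + B.mulVec y j := by
    rw [Matrix.add_mulVec, Matrix.one_mulVec]; rfl
  have hsum : B j k * y k ≤ B.mulVec y j := by
    rw [Matrix.mulVec, dotProduct]
    exact Finset.single_le_sum (f := fun l => B j l * y l)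
      (fun l _ => mul_nonneg (hB j l) (hy l)) (Finset.mem_univ k)
  have : 0 < B.mulVec y j := lt_of_lt_of_le (mul_pos hBjk' (mem_supp.mp hkS)) hsum
  rw [hval]
  exact add_pos_of_nonneg_of_pos (hy j) this

lemma supp_card_growth (hB : Nng B) (hI : Irr B) :
    ∀ k : ℕ, ∀ y : Fin n → ℝ, (∀ i, 0 ≤ y i) → y ≠ 0 →
      min n ((supp y).card + k) ≤ (supp (((1 + B) ^ k).mulVec y)).card := by
  intro k
  induction k with
  | zero =>
    intro y hy hy0
    simp only [pow_zero, Matrix.one_mulVec]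
    exact le_trans (min_le_right _ _) (by omega)
  | succ k ih =>
    intro y hy hy0
    set y' := (1 + B).mulVec y with hy'def
    have hy' : ∀ i, 0 ≤ y' i := (step_supp hB hy).1
    have hsub : supp y ⊆ supp y' := by
      intro i hi
      exact mem_supp.mpr ((step_supp hB hy).2 i (mem_supp.mp hi))
    have hy'0 : y' ≠ 0 := by
      obtain ⟨i, hi⟩ := supp_nonempty hy hy0
      intro h
      have := mem_supp.mp (hsub hi)
      rw [h] at this
      exact lt_irrefl 0 this
    have hiter : ((1 + B) ^ (k + 1)).mulVec y = ((1 + B) ^ k).mulVec y' := by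
      rw [hy'def, Matrix.mulVec_mulVec, ← pow_succ]
    rw [hiter]
    refine le_trans ?_ (ih y' hy' hy'0)
    by_cases hcase : supp y = Finset.univ
    · have h1 : (supp y).card = n := by rw [hcase]; simp
      have h2 : n ≤ (supp y').card := le_trans (le_of_eq h1.symm) (Finset.card_le_card hsub)
      have h3 : (supp y').card ≤ n := le_trans (Finset.card_le_univ _) (by simp)
      omega
    · obtain ⟨j, hj, hjpos⟩ := step_supp_grow hB hI hy (supp_nonempty hy hy0) hcase
      have hins : insert j (supp y) ⊆ supp y' := by
        intro x hx
        rcases Finset.mem_insert.mp hx with h | h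
        · exact h ▸ mem_supp.mpr hjpos
        · exact hsub h
      have : (supp y).card + 1 ≤ (supp y').card := by
        have := Finset.card_le_card hins
        rwa [Finset.card_insert_of_notMem hj] at this
      omega

lemma pos_pow_mulVec (hB : Nng B) (hI : Irr B) {y : Fin n → ℝ}
    (hy : ∀ i, 0 ≤ y i) (hy0 : y ≠ 0) :
    ∀ i, 0 < (((1 + B) ^ (n - 1)).mulVec y) i := by
  have hn : 0 < n := by
    obtain ⟨i, _⟩ := supp_nonempty hy hy0
    exact i.pos
  have h := supp_card_growth hB hI (n - 1) y hy hy0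
  have h1 : 1 ≤ (supp y).card := Finset.card_pos.mpr (supp_nonempty hy hy0)
  have h2 : n ≤ (supp (((1 + B) ^ (n - 1)).mulVec y)).card := by
    have : min n ((supp y).card + (n - 1)) = n := by omega
    omega
  have huniv : supp (((1 + B) ^ (n - 1)).mulVec y) = Finset.univ := by
    apply Finset.eq_univ_of_card
    have := Finset.card_le_univ (supp (((1 + B) ^ (n - 1)).mulVec y))
    simp only [Finset.card_univ, Fintype.card_fin] at this ⊢
    omega
  intro i
  exact mem_supp.mp (huniv ▸ Finset.mem_univ i)

end Growth

lemma perron {B : Matrix (Fin n) (Fin n) ℝ} (hn : 0 < n) (hB : Nng B) (hI : Irr B) :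
    ∃ u : Fin n → ℝ, (∀ i, 0 < u i) ∧ ∀ i, B.mulVec u i = specRad B * u i := by
  haveI : Nonempty (Fin n) := ⟨⟨0, hn⟩⟩
  haveI : Finite (spectrum ℂ (cx B)) := Matrix.instFiniteSpectrum _
  haveI : Nonempty (spectrum ℂ (cx B)) := (spectrum.nonempty (cx B)).to_subtype
  set s := specRad B with hs
  have hs0 : 0 ≤ s := specRad_nonneg B
  obtain ⟨μ₀, hmax⟩ := Finite.exists_max (fun μ : spectrum ℂ (cx B) => ‖(μ : ℂ)‖)
  have habs : ‖(μ₀ : ℂ)‖ = s :=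
    le_antisymm (abs_le_specRad μ₀.2) (ciSup_le hmax)
  obtain ⟨y, hy, ⟨iy, hiy⟩, hineq⟩ := exists_abs_eigen hB μ₀.2
  rw [habs] at hineq
  have hy0 : y ≠ 0 := by
    intro h
    rw [h] at hiy
    exact lt_irrefl 0 hiy
  -- w = By - s y ≥ 0
  set w : Fin n → ℝ := fun i => B.mulVec y i - s * y i with hw
  have hwpos : ∀ i, 0 ≤ w i := fun i => sub_nonneg.mpr (hineq i)
  by_cases hwz : w = 0
  · -- eigen equation holds; positivity via (1+B)^(n-1)
    have heig : ∀ i, B.mulVec y i = s * y i := by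
      intro i
      have := congrFun hwz i
      simp only [hw, Pi.zero_apply, sub_eq_zero] at this
      exact this
    have hiterate : ∀ k : ℕ, ((1 + B) ^ k).mulVec y = fun i => (1 + s) ^ k * y i := by
      intro k
      induction k with
      | zero => funext i; simp [Matrix.one_mulVec]
      | succ k ih =>
        funext i
        have : ((1 + B) ^ (k + 1)).mulVec y = ((1 + B) ^ k).mulVec ((1 + B).mulVec y) := by
          rw [Matrix.mulVec_mulVec, ← pow_succ]
        rw [this]
        have h1 : (1 + B).mulVec y = fun l => (1 + s) * y l := by
          funext l
          rw [Matrix.add_mulVec, Matrix.one_mulVec]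
          show y l + B.mulVec y l = (1 + s) * y l
          rw [heig l]; ring
        rw [h1]
        have h2 : ((1 + B) ^ k).mulVec (fun l => (1 + s) * y l) i
            = (1 + s) * ((1 + B) ^ k).mulVec y i := by
          simp only [Matrix.mulVec, dotProduct, Finset.mul_sum]
          exact Finset.sum_congr rfl fun l _ => by ring
        rw [h2, ih]
        ring
    have hz := pos_pow_mulVec hB hI hy hy0
    have hypos : ∀ i, 0 < y i := by
      intro i
      have h1 := hz i
      rw [hiterate (n - 1)] at h1
      have h1' : 0 < (1 + s) ^ (n - 1) * y i := h1
      have h2 : (0 : ℝ) < (1 + s) ^ (n - 1) := by positivity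
      nlinarith
    exact ⟨y, hypos, heig⟩
  · -- contradiction with specRad
    exfalso
    have hzpos := pos_pow_mulVec hB hI hy hy0
    have hwvec := pos_pow_mulVec hB hI hwpos hwz
    set Q := (1 + B) ^ (n - 1) with hQ
    set z := Q.mulVec y with hzdef
    -- Q.mulVec w = B.mulVec z - s • z
    have hcomm : Q * B = B * Q := by
      have c : Commute B (1 + B) := (Commute.one_right B).add_right (Commute.refl B)
      exact (c.pow_right (n - 1)).symm.eq
    have hQw : ∀ i, Q.mulVec w i = B.mulVec z i - s * z i := by
      intro i
      have h1 : Q.mulVec w = Q.mulVec (B.mulVec y) - Q.mulVec (fun l => s * y l) := by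
        rw [← Matrix.mulVec_sub]
        congr 1
      have h2 : Q.mulVec (B.mulVec y) = B.mulVec z := by
        rw [Matrix.mulVec_mulVec, hcomm, ← Matrix.mulVec_mulVec]
      have h3 : Q.mulVec (fun l => s * y l) i = s * z i := by
        simp only [Matrix.mulVec, dotProduct, Finset.mul_sum, hzdef, hQ]
        exact Finset.sum_congr rfl fun l _ => by ring
      rw [h1]
      show Q.mulVec (B.mulVec y) i - Q.mulVec (fun l => s * y l) i = _
      rw [h2, h3]
    haveI : Nonempty (Fin n) := ⟨⟨0, hn⟩⟩
    set ε := Finset.univ.inf' Finset.univ_nonempty (fun i => B.mulVec z i - s * z i) with hε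
    set Z := Finset.univ.sup' Finset.univ_nonempty z with hZ
    have hεpos : 0 < ε := by
      rw [hε]
      exact (Finset.lt_inf'_iff _).mpr fun i _ => by rw [← hQw i]; exact hwvec i
    have hZpos : 0 < Z := lt_of_lt_of_le (hzpos ⟨0, hn⟩)
      (Finset.le_sup' z (Finset.mem_univ _))
    have hzZ : ∀ i, z i ≤ Z := fun i => Finset.le_sup' z (Finset.mem_univ i)
    have hεle : ∀ i, ε ≤ B.mulVec z i - s * z i := fun i =>
      Finset.inf'_le _ (Finset.mem_univ i)
    set t := s + ε / Z with ht
    have htpos : 0 < t := by positivity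
    have hsub : ∀ i, t * z i ≤ B.mulVec z i := by
      intro i
      have h1 : (ε / Z) * z i ≤ ε := by
        rw [div_mul_eq_mul_div, div_le_iff₀ hZpos]
        exact mul_le_mul_of_nonneg_left (hzZ i) hεpos.le
      have h2 := hεle i
      calc t * z i = s * z i + (ε / Z) * z i := by rw [ht]; ring
      _ ≤ s * z i + ε := by linarith
      _ ≤ B.mulVec z i := by linarith
    have := le_specRad_of_subinvariant hB (fun i => (hzpos i).le) (hzpos ⟨0, hn⟩)
      htpos hsub
    rw [← hs] at this
    have : ε / Z ≤ 0 := by rw [ht] at this; linarith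
    have : 0 < ε / Z := by positivity
    linarith

lemma specRad_lt_of_dominated {C : Matrix (Fin n) (Fin n) ℝ} (hn : 0 < n)
    (hC : Nng C) (hI : Irr C) {u : Fin n → ℝ} (hu : ∀ i, 0 < u i) {t : ℝ}
    (ht : 0 < t) (hle : ∀ i, C.mulVec u i ≤ t * u i) {i₀ : Fin n}
    (hstrict : C.mulVec u i₀ < t * u i₀) : specRad C < t := by
  haveI : Nonempty (Fin n) := ⟨⟨0, hn⟩⟩
  apply specRad_lt hn
  intro μ hμ
  by_contra hge
  push_neg at hge
  obtain ⟨y, hy, ⟨iy, hiy⟩, hineq⟩ := exists_abs_eigen hC hμ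
  have hty : ∀ i, t * y i ≤ C.mulVec y i := fun i =>
    le_trans (mul_le_mul_of_nonneg_right hge (hy i)) (hineq i)
  set α := Finset.univ.sup' Finset.univ_nonempty (fun i => y i / u i) with hα
  have hαle : ∀ i, y i ≤ α * u i := by
    intro i
    have h1 : y i / u i ≤ α := by
      rw [hα]; exact Finset.le_sup' (fun i => y i / u i) (Finset.mem_univ i)
    rwa [div_le_iff₀ (hu i)] at h1
  have hαpos : 0 < α := by
    refine lt_of_lt_of_le (div_pos hiy (hu iy)) ?_
    rw [hα]; exact Finset.le_sup' (fun i => y i / u i) (Finset.mem_univ iy)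
  set S := Finset.univ.filter fun j => y j = α * u j with hS
  have hSne : S.Nonempty := by
    obtain ⟨i, _, hieq⟩ := Finset.exists_mem_eq_sup' Finset.univ_nonempty
      (fun i => y i / u i)
    refine ⟨i, Finset.mem_filter.mpr ⟨Finset.mem_univ i, ?_⟩⟩
    have h2 : y i / u i = α := hieq.symm
    exact (div_eq_iff (ne_of_gt (hu i))).mp h2
  have hkey : ∀ j ∈ S, (∀ k, 0 < C j k → k ∈ S) ∧ j ≠ i₀ := by
    intro j hj
    have hjeq : y j = α * u j := (Finset.mem_filter.mp hj).2
    have h1 : t * y j ≤ C.mulVec y j := hty j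
    have h2 : C.mulVec y j ≤ α * C.mulVec u j := by
      rw [Matrix.mulVec, Matrix.mulVec, dotProduct, dotProduct,
        Finset.mul_sum]
      exact Finset.sum_le_sum fun k _ => by
        have := mul_le_mul_of_nonneg_left (hαle k) (hC j k)
        calc C j k * y k ≤ C j k * (α * u k) := this
        _ = α * (C j k * u k) := by ring
    have h3 : α * C.mulVec u j ≤ α * (t * u j) :=
      mul_le_mul_of_nonneg_left (hle j) hαpos.le
    have heqchain : t * y j = α * (t * u j) := by rw [hjeq]; ring
    have he3 : α * C.mulVec u j = α * (t * u j) := le_antisymm h3 (by linarith)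
    have he2 : C.mulVec y j = α * C.mulVec u j := le_antisymm h2 (by linarith)
    constructor
    · intro k hk
      have hterm : ∀ l ∈ Finset.univ, C j l * y l ≤ C j l * (α * u l) := fun l _ =>
        mul_le_mul_of_nonneg_left (hαle l) (hC j l)
      have hsums : ∑ l, C j l * y l = ∑ l, C j l * (α * u l) := by
        have lhs : C.mulVec y j = ∑ l, C j l * y l := rfl
        have rhs : α * C.mulVec u j = ∑ l, C j l * (α * u l) := by
          rw [Matrix.mulVec, dotProduct, Finset.mul_sum]
          exact Finset.sum_congr rfl fun l _ => by ring
        rw [← lhs, ← rhs, he2]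
      have hall := (Finset.sum_eq_sum_iff_of_le hterm).mp hsums
      have hk' := hall k (Finset.mem_univ k)
      have : y k = α * u k := mul_left_cancel₀ (ne_of_gt hk) hk'
      exact Finset.mem_filter.mpr ⟨Finset.mem_univ k, this⟩
    · intro hji
      rw [hji] at he3
      have : C.mulVec u i₀ = t * u i₀ := by
        have := mul_left_cancel₀ (ne_of_gt hαpos) he3
        exact this
      linarith
  by_cases hcase : S = Finset.univ
  · exact ((hkey i₀ (hcase ▸ Finset.mem_univ i₀)).2) rfl
  · obtain ⟨j, hj, k, hk, hCjk⟩ := hI S hSne hcase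
    exact hk ((hkey j hj).1 k (lt_of_le_of_ne (hC j k) (Ne.symm hCjk)))

lemma entry_nnnorm_le (X : Matrix (Fin n) (Fin n) ℝ) (i j : Fin n) : ‖X i j‖ ≤ ‖X‖ := by
  have h1 : ‖X i j‖₊ ≤ ∑ j', ‖X i j'‖₊ :=
    Finset.single_le_sum (f := fun j' => ‖X i j'‖₊) (fun _ _ => zero_le)
      (Finset.mem_univ j)
  have h2 : (∑ j', ‖X i j'‖₊) ≤ Finset.univ.sup fun a => ∑ j', ‖X a j'‖₊ :=
    Finset.le_sup (f := fun a => ∑ j', ‖X a j'‖₊) (Finset.mem_univ i)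
  have h : ‖X i j‖₊ ≤ ‖X‖₊ := by
    rw [Matrix.linfty_opNNNorm_def]
    exact le_trans h1 h2
  exact_mod_cast h

/-- entry evaluation as a continuous linear map. -/
noncomputable def entryCLM (i j : Fin n) : Matrix (Fin n) (Fin n) ℝ →L[ℝ] ℝ :=
  LinearMap.mkContinuous
    { toFun := fun X => X i j
      map_add' := fun _ _ => rfl
      map_smul' := fun _ _ => rfl } 1
    (fun X => by rw [one_mul]; exact entry_nnnorm_le X i j)

lemma neumann {C : Matrix (Fin n) (Fin n) ℝ} (hC : Nng C) {t : ℝ} (ht : 0 < t)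
    (hlt : specRad C < t) :
    IsUnit (t • (1 : Matrix (Fin n) (Fin n) ℝ) - C).det ∧
      ∀ i j, 0 ≤ (t • (1 : Matrix (Fin n) (Fin n) ℝ) - C)⁻¹ i j := by
  obtain ⟨k, hk, hknorm⟩ := exists_pow_norm_lt C hlt ht
  have htk : (0 : ℝ) < t ^ k := by positivity
  set X := (t ^ k)⁻¹ • C ^ k with hXdef
  have hXnng : Nng X := fun i j =>
    mul_nonneg (le_of_lt (inv_pos.mpr htk)) ((hC.pow k) i j)
  have hXnorm : ‖X‖ < 1 := by
    rw [hXdef, norm_smul, Real.norm_eq_abs, abs_of_pos (inv_pos.mpr htk),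
      inv_mul_eq_div]
    exact (div_lt_one htk).mpr hknorm
  have hsum : Summable (fun m : ℕ => X ^ m) := summable_geometric_of_norm_lt_one hXnorm
  set G := ∑' m : ℕ, X ^ m with hGdef
  have hGmul : (1 - X) * G = 1 := mul_neg_geom_series X hXnorm
  have hGnng : Nng G := by
    intro i j
    have h1 : G i j = entryCLM i j G := rfl
    have h2 : entryCLM i j G = ∑' m : ℕ, entryCLM i j (X ^ m) :=
      ContinuousLinearMap.map_tsum (entryCLM i j) hsum
    rw [h1, h2]
    exact tsum_nonneg fun m => (hXnng.pow m) i j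
  set P := ∑ i ∈ Finset.range k, (t • (1 : Matrix (Fin n) (Fin n) ℝ)) ^ i * C ^ (k - 1 - i)
    with hPdef
  have hPnng : Nng P := by
    intro a b
    rw [hPdef, Matrix.sum_apply]
    refine Finset.sum_nonneg fun i _ => ?_
    have h1 : (t • (1 : Matrix (Fin n) (Fin n) ℝ)) ^ i * C ^ (k - 1 - i)
        = t ^ i • (C ^ (k - 1 - i)) := by
      rw [smul_pow, one_pow, smul_mul_assoc, one_mul]
    rw [h1]
    exact mul_nonneg (by positivity) ((hC.pow _) a b)
  have hcomm : Commute (t • (1 : Matrix (Fin n) (Fin n) ℝ)) C :=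
    (Commute.one_left C).smul_left t
  have hNP : (t • (1 : Matrix (Fin n) (Fin n) ℝ) - C) * P
      = t ^ k • (1 : Matrix (Fin n) (Fin n) ℝ) - C ^ k := by
    have := hcomm.mul_geom_sum₂ k
    rw [hPdef]
    rw [this, smul_pow, one_pow]
  have hfac : t ^ k • (1 : Matrix (Fin n) (Fin n) ℝ) - C ^ k = t ^ k • (1 - X) := by
    rw [smul_sub, hXdef, smul_smul, mul_inv_cancel₀ (ne_of_gt htk), one_smul]
  have hQ : (t ^ k • (1 : Matrix (Fin n) (Fin n) ℝ) - C ^ k) * ((t ^ k)⁻¹ • G) = 1 := by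
    rw [hfac, smul_mul_smul_comm, mul_inv_cancel₀ (ne_of_gt htk), hGmul, one_smul]
  have hNright : (t • (1 : Matrix (Fin n) (Fin n) ℝ) - C) * (P * ((t ^ k)⁻¹ • G)) = 1 := by
    rw [← mul_assoc, hNP, hQ]
  constructor
  · exact Matrix.isUnit_det_of_right_inverse hNright
  · intro i j
    rw [Matrix.inv_eq_right_inv hNright]
    have hsm : Nng ((t ^ k)⁻¹ • G) := fun a b =>
      mul_nonneg (le_of_lt (inv_pos.mpr htk)) (hGnng a b)
    exact (hPnng.mul hsm) i j

end StmtAux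

theorem stmt_15 {n : ℕ} (M A : Matrix (Fin n) (Fin n) ℝ)
    (hsing : IsSingMMatrix M) (hirr : ¬ IsReducibleM M)
    (hA : A = 1 + M) (d : Fin n → ℝ)
    (hd : ∀ i, d i = -1 ∨ d i = 0 ∨ d i = 1)
    (hdI : Matrix.diagonal d ≠ (1 : Matrix (Fin n) (Fin n) ℝ)) :
    IsNonsingMMatrix (A - Matrix.diagonal d) ∧
      IsUnit (A - Matrix.diagonal d).det ∧
        ∀ i j, 0 ≤ (A - Matrix.diagonal d)⁻¹ i j := by
  open StmtAux in
  rcases Nat.eq_zero_or_pos n with hn0 | hn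
  · exfalso
    apply hdI
    subst hn0
    ext i j
    exact i.elim0
  obtain ⟨s, B, hB, hM, hs⟩ := hsing
  have hBnng : Nng B := hB
  have hs0 : 0 ≤ s := hs ▸ specRad_nonneg B
  have hpatM := irr_of_not_reducible hirr
  have hoffdiag : ∀ j k : Fin n, j ≠ k → M j k = -B j k := by
    intro j k hjk
    rw [hM]
    simp [Matrix.sub_apply, Matrix.smul_apply, Matrix.one_apply_ne hjk]
  have hIrrB : Irr B := by
    intro S h1 h2
    obtain ⟨j, hj, k, hk, hMjk⟩ := hpatM S h1 h2
    have hjk : j ≠ k := fun h => hk (h ▸ hj)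
    refine ⟨j, hj, k, hk, ?_⟩
    intro h
    apply hMjk
    rw [hoffdiag j k hjk, h, neg_zero]
  obtain ⟨u, hu, hueq⟩ := perron hn hBnng hIrrB
  rw [hs] at hueq
  set C := B + (1 + Matrix.diagonal d) with hCdef
  have hd1 : ∀ i, -1 ≤ d i ∧ d i ≤ 1 := by
    intro i
    rcases hd i with h | h | h <;> rw [h] <;> norm_num
  have hCnng : Nng C := by
    intro i j
    by_cases h : i = j
    · subst h
      have := (hd1 i).1
      simp only [hCdef, Matrix.add_apply, Matrix.one_apply_eq, Matrix.diagonal_apply_eq]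
      have := hB i i
      linarith [(hd1 i).1]
    · simp only [hCdef, Matrix.add_apply, Matrix.one_apply_ne h,
        Matrix.diagonal_apply_ne _ h, add_zero, zero_add]
      simpa using hB i j
  have hIrrC : Irr C := by
    intro S h1 h2
    obtain ⟨j, hj, k, hk, hBjk⟩ := hIrrB S h1 h2
    have hjk : j ≠ k := fun h => hk (h ▸ hj)
    refine ⟨j, hj, k, hk, ?_⟩
    simpa [hCdef, Matrix.add_apply, Matrix.one_apply_ne hjk,
      Matrix.diagonal_apply_ne _ hjk] using hBjk
  have hEq : A - Matrix.diagonal d = (s + 2) • (1 : Matrix (Fin n) (Fin n) ℝ) - C := by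
    rw [hA, hM, hCdef]
    ext i j
    by_cases h : i = j
    · subst h
      simp only [Matrix.sub_apply, Matrix.add_apply, Matrix.smul_apply,
        Matrix.one_apply_eq, Matrix.diagonal_apply_eq, smul_eq_mul]
      ring
    · simp only [Matrix.sub_apply, Matrix.add_apply, Matrix.smul_apply,
        Matrix.one_apply_ne h, Matrix.diagonal_apply_ne _ h, smul_eq_mul]
      ring
  have hexi : ∃ i, d i ≠ 1 := by
    by_contra hcon
    push_neg at hcon
    apply hdI
    ext i j
    by_cases h : i = j
    · subst h
      rw [Matrix.diagonal_apply_eq, Matrix.one_apply_eq, hcon i]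
    · rw [Matrix.diagonal_apply_ne _ h, Matrix.one_apply_ne h]
  obtain ⟨i₀, hi₀⟩ := hexi
  have hdi₀ : d i₀ ≤ 0 := by
    rcases hd i₀ with h | h | h
    · rw [h]; norm_num
    · rw [h]
    · exact absurd h hi₀
  have hCu : ∀ i, C.mulVec u i = s * u i + (1 + d i) * u i := by
    intro i
    rw [hCdef, Matrix.add_mulVec, Matrix.add_mulVec, Matrix.one_mulVec]
    show B.mulVec u i + (u i + (Matrix.diagonal d).mulVec u i) = _
    rw [Matrix.mulVec_diagonal, hueq i]
    ring
  have ht : (0 : ℝ) < s + 2 := by linarith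
  have hle : ∀ i, C.mulVec u i ≤ (s + 2) * u i := by
    intro i
    rw [hCu i]
    have h1 : (1 + d i) * u i ≤ 2 * u i :=
      mul_le_mul_of_nonneg_right (by linarith [(hd1 i).2]) (hu i).le
    linarith
  have hstrict : C.mulVec u i₀ < (s + 2) * u i₀ := by
    rw [hCu i₀]
    have h1 : (1 + d i₀) * u i₀ < 2 * u i₀ :=
      mul_lt_mul_of_pos_right (by linarith) (hu i₀)
    linarith
  have hradC : specRad C < s + 2 :=
    specRad_lt_of_dominated hn hCnng hIrrC hu ht hle hstrict
  have hne := neumann hCnng ht hradC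
  refine ⟨⟨s + 2, C, hCnng, hEq, hradC⟩, ?_, ?_⟩
  · rw [hEq]; exact hne.1
  · rw [hEq]; exact hne.2
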